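/- In the scaled one-step NormalHedge setting, if the average potential satisfies 2.31 < Ψ = (1/N)·Σ_{i=1}^N Φ(R_i) < 2.32, then the average potential strictly decreases after one update: Ψ' = (1/N)·Σ_{i=1}^N Φ(R'_i) < Ψ. -/

import Mathlib

/-!
Expand `Φ` to second order around each `R i`. The first-order terms add up to
`-α ∑ Φ'(R i) R i = -2α ∑ Φ(R i) log Φ(R i)`: the weights `p ∝ Φ'(R)` make
`∑ Φ'(R i) (g i - g_A)` vanish, and `Φ'(x) x = 2 Φ(x) log Φ(x)`. Since `Φ(R i) ≤ 2.32 N` and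
`α log (2.32 N) < 1/800`, the drift `α R i` is small, so each step `R' i - R i` is `O(√α)` and
the second-order terms are at most `α (0.65 Φ + 1.17 Φ log Φ)`; for `R i ≤ 0` monotonicity gives
`Φ(R' i) ≤ Φ(2√α) = e^{α/2}` instead. Altogether
`∑ Φ(R') - ∑ Φ(R) ≤ α (0.65 ∑ Φ - 0.83 ∑ Φ log Φ)`, which is negative by the tangent-line bound
`t log t ≥ (1 + log 2.31) t - 2.31` and `∑ Φ > 2.31 N`.
-/

open Finset

/-- The NormalHedge potential function: `Φ(x) = exp(x²/8)` for `x > 0`, `1` for `x ≤ 0`. -/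
noncomputable def Phi (x : ℝ) : ℝ := if 0 < x then Real.exp (x ^ 2 / 8) else 1

/-- Derivative of the potential: `Φ'(x) = (x/4)·exp(x²/8)` for `x > 0`, `0` for `x ≤ 0`. -/
noncomputable def Phi' (x : ℝ) : ℝ := if 0 < x then (x / 4) * Real.exp (x ^ 2 / 8) else 0

namespace NormalHedge

open Real

lemma Phi_eq_exp_max (x : ℝ) : Phi x = exp (max x 0 ^ 2 / 8) := by
  unfold Phi
  split_ifs with h
  · rw [max_eq_left h.le]
  · simp [max_eq_right (not_lt.1 h)]

lemma Phi'_eq_max (x : ℝ) : Phi' x = max x 0 / 4 * exp (max x 0 ^ 2 / 8) := by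
  unfold Phi'
  split_ifs with h
  · rw [max_eq_left h.le]
  · simp [max_eq_right (not_lt.1 h)]

lemma Phi_of_nonpos {x : ℝ} (hx : x ≤ 0) : Phi x = 1 := if_neg hx.not_gt

lemma Phi'_of_nonpos {x : ℝ} (hx : x ≤ 0) : Phi' x = 0 := if_neg hx.not_gt

lemma Phi_pos (x : ℝ) : 0 < Phi x := by
  rw [Phi_eq_exp_max]; exact exp_pos _

lemma Phi'_nonneg (x : ℝ) : 0 ≤ Phi' x := by
  rw [Phi'_eq_max]; positivity

lemma log_Phi (x : ℝ) : log (Phi x) = max x 0 ^ 2 / 8 := by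
  rw [Phi_eq_exp_max, log_exp]

lemma Phi'_mul_self (x : ℝ) : Phi' x * x = 2 * (Phi x * log (Phi x)) := by
  rw [log_Phi, Phi'_eq_max, Phi_eq_exp_max]
  rcases le_total x 0 with h | h
  · simp [max_eq_right h]
  · rw [max_eq_left h]; ring

lemma monotone_Phi : Monotone Phi := fun x y hxy => by
  simp only [Phi_eq_exp_max, exp_le_exp]
  gcongr

lemma hasDerivAt_Phi (x : ℝ) : HasDerivAt Phi (Phi' x) x := by
  refine hasDerivAt_of_hasDerivAt_of_ne' (x := 0) (fun y hy => ?_)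
    (by simp only [funext Phi_eq_exp_max]; fun_prop)
    (by simp only [funext Phi'_eq_max]; fun_prop) x
  rcases hy.lt_or_gt with hy | hy
  · rw [Phi'_of_nonpos hy.le]
    exact (hasDerivAt_const y 1).congr_of_eventuallyEq
      (eventually_le_nhds hy |>.mono fun z hz => Phi_of_nonpos hz)
  · have hexp : HasDerivAt (fun z => exp (z ^ 2 / 8)) (Phi' y) y := by
      convert ((hasDerivAt_pow 2 y).div_const 8).exp using 1
      rw [Phi', if_pos hy]; ring
    exact hexp.congr_of_eventuallyEq
      (eventually_gt_nhds hy |>.mono fun z hz => if_pos hz)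

theorem le_add_deriv_mul_add_sq {f f' : ℝ → ℝ} {a b K : ℝ}
    (hf : ∀ x, HasDerivAt f (f' x) x)
    (hf' : ∀ x ∈ Set.uIcc a b, (f' x - f' a) * (x - a) ≤ K * (x - a) ^ 2) :
    f b ≤ f a + f' a * (b - a) + K / 2 * (b - a) ^ 2 := by
  set g := fun x => f x - f' a * (x - a) - K / 2 * (x - a) ^ 2
  have hg (x : ℝ) : HasDerivAt g (f' x - f' a - K * (x - a)) x := by
    have hsq : HasDerivAt (fun y => (y - a) ^ 2) (2 * (x - a)) x := by
      simpa using ((hasDerivAt_id' x).sub_const a).fun_pow 2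
    exact ((hf x).fun_sub (((hasDerivAt_id' x).sub_const a).const_mul (f' a))).fun_sub
      (hsq.const_mul (K / 2)) |>.congr_deriv (by ring)
  have hgcont : Continuous g := continuous_iff_continuousAt.2 fun x => (hg x).continuousAt
  suffices g b ≤ g a by simp only [g, sub_self] at this; linarith
  rcases le_total a b with hab | hba
  · refine antitoneOn_of_hasDerivWithinAt_nonpos (convex_Icc a b) hgcont.continuousOn
      (fun x _ => (hg x).hasDerivWithinAt) (fun x hx => ?_) ⟨le_rfl, hab⟩ ⟨hab, le_rfl⟩ hab
    rw [interior_Icc] at hx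
    have := hf' x (Set.Icc_subset_uIcc (Set.Ioo_subset_Icc_self hx))
    nlinarith [hx.1]
  · refine monotoneOn_of_hasDerivWithinAt_nonneg (convex_Icc b a) hgcont.continuousOn
      (fun x _ => (hg x).hasDerivWithinAt) (fun x hx => ?_) ⟨le_rfl, hba⟩ ⟨hba, le_rfl⟩ hba
    rw [interior_Icc] at hx
    have := hf' x (Set.Icc_subset_uIcc' (Set.Ioo_subset_Icc_self hx))
    nlinarith [hx.2]

/-- The second derivative of `Φ` on `(0, ∞)`. -/
noncomputable def Phi'' (x : ℝ) : ℝ := (1 / 4 + x ^ 2 / 16) * exp (x ^ 2 / 8)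

lemma Phi''_pos (x : ℝ) : 0 < Phi'' x := by
  unfold Phi''; positivity

lemma monotoneOn_Phi'' : MonotoneOn Phi'' (Set.Ici 0) := fun x hx y _ hxy => by
  have : x ^ 2 ≤ y ^ 2 := pow_le_pow_left₀ hx hxy 2
  unfold Phi''
  gcongr

lemma hasDerivAt_mul_exp_sq (x : ℝ) :
    HasDerivAt (fun y => y / 4 * exp (y ^ 2 / 8)) (Phi'' x) x := by
  have hexp : HasDerivAt (fun y => exp (y ^ 2 / 8)) (exp (x ^ 2 / 8) * (x / 4)) x :=
    ((hasDerivAt_pow 2 x).div_const 8).exp.congr_deriv (by ring)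
  exact ((hasDerivAt_id' x).div_const 4).mul hexp |>.congr_deriv (by unfold Phi''; ring)

lemma Phi'_sub_le {u v c : ℝ} (huv : u ≤ v) (hvc : v ≤ c) (hc : 0 ≤ c) :
    Phi' v - Phi' u ≤ Phi'' c * (v - u) := by
  have hmvt := (convex_Icc 0 c).image_sub_le_mul_sub_of_deriv_le
    (f := fun y => y / 4 * exp (y ^ 2 / 8)) (by fun_prop) (by fun_prop)
    (fun x hx => by
      rw [interior_Icc] at hx
      rw [(hasDerivAt_mul_exp_sq x).deriv]
      exact monotoneOn_Phi'' (Set.mem_Ici.2 hx.1.le) (Set.mem_Ici.2 hc) hx.2.le)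
    (max u 0) ⟨le_max_right _ _, max_le (huv.trans hvc) hc⟩
    (max v 0) ⟨le_max_right _ _, max_le hvc hc⟩ (max_le_max_right 0 huv)
  have hmax : max v 0 - max u 0 ≤ v - u := by
    linarith [max_le (by linarith [le_max_left u 0] : v ≤ max u 0 + (v - u))
      (by linarith [le_max_right u 0] : 0 ≤ max u 0 + (v - u))]
  rw [Phi'_eq_max, Phi'_eq_max]
  exact hmvt.trans (mul_le_mul_of_nonneg_left hmax (Phi''_pos c).le)

lemma Phi_le_add_Phi'_mul_add_sq {a b c : ℝ} (hac : a ≤ c) (hbc : b ≤ c) (hc : 0 ≤ c) :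
    Phi b ≤ Phi a + Phi' a * (b - a) + Phi'' c / 2 * (b - a) ^ 2 := by
  refine le_add_deriv_mul_add_sq hasDerivAt_Phi fun x hx => ?_
  have hxc : x ≤ c := hx.2.trans (max_le hac hbc)
  rcases le_total a x with hax | hxa
  · nlinarith [Phi'_sub_le hax hxc hc]
  · nlinarith [Phi'_sub_le hxa hac hc]

lemma exp_half_le_one_add {α : ℝ} (hα0 : 0 ≤ α) (hα : α ≤ 2 / 5) :
    exp (α / 2) ≤ 1 + 0.65 * α := by
  calc exp (α / 2) ≤ 1 / (1 - α / 2) :=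
        exp_bound_div_one_sub_of_interval (by positivity) (by linarith)
    _ ≤ 1 + 0.65 * α := by rw [div_le_iff₀ (by linarith)]; nlinarith

lemma Phi_update_le_of_nonpos {α a b : ℝ} (hα0 : 0 ≤ α) (hα : α ≤ 2 / 5) (ha : a ≤ 0)
    (hb : |b - (1 - α) * a| ≤ 2 * √α) : Phi b ≤ 1 + 0.65 * α := by
  have hb' : b ≤ 2 * √α := by
    linarith [(abs_le.1 hb).2, mul_nonpos_of_nonneg_of_nonpos (by linarith : 0 ≤ 1 - α) ha]
  calc Phi b ≤ Phi (2 * √α) := monotone_Phi hb'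
    _ = exp (α / 2) := by
      rw [Phi_eq_exp_max, max_eq_left (by positivity), mul_pow, sq_sqrt hα0]; ring_nf
    _ ≤ 1 + 0.65 * α := exp_half_le_one_add hα0 hα

lemma Phi_update_le_of_pos {α a b : ℝ} (hα0 : 0 ≤ α) (hα : α ≤ 1 / 640) (ha : 0 < a)
    (hαa : α * a ^ 2 ≤ 1 / 100) (hb : |b - (1 - α) * a| ≤ 2 * √α) :
    Phi b ≤ Phi a + Phi' a * (b - a) + α * (Phi a * (0.65 + 1.17 * (a ^ 2 / 8))) := by
  set s := √α
  have hs : s ^ 2 = α := sq_sqrt hα0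
  have hsa : s * a ≤ 1 / 10 := by nlinarith [mul_nonneg (sqrt_nonneg α) ha.le]
  -- `u` = drift `α a` + noise `2 √α` bounds the step `|b - a|`.
  set u := α * a + 2 * s
  have hba : |b - a| ≤ u := by
    rw [abs_le] at hb ⊢
    constructor <;> nlinarith [mul_nonneg hα0 ha.le]
  have hu2 : u ^ 2 ≤ 4.41 * α := by
    have := mul_le_mul_of_nonneg_left hαa hα0
    have := mul_le_mul_of_nonneg_left hsa hα0
    nlinarith
  have hau2 : (a + u) ^ 2 ≤ a ^ 2 + 0.427 := by nlinarith
  have hE := exp_pos (a ^ 2 / 8)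
  have hK : Phi'' (a + u) ≤ (1 / 4 + (a ^ 2 + 0.427) / 16) * (exp (a ^ 2 / 8) * 1.057) := by
    have h1057 : exp 0.0534 ≤ 1.057 := by
      refine (exp_bound_div_one_sub_of_interval (by norm_num) (by norm_num)).trans ?_
      norm_num
    have : exp ((a + u) ^ 2 / 8) ≤ exp (a ^ 2 / 8) * 1.057 :=
      calc exp ((a + u) ^ 2 / 8) ≤ exp (a ^ 2 / 8 + 0.0534) := exp_le_exp.2 (by linarith)
        _ = exp (a ^ 2 / 8) * exp 0.0534 := exp_add _ _
        _ ≤ exp (a ^ 2 / 8) * 1.057 := by gcongr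
    unfold Phi''
    gcongr
  have htaylor := Phi_le_add_Phi'_mul_add_sq (a := a) (b := b) (c := a + u)
    (by linarith [abs_nonneg (b - a)]) (by linarith [le_abs_self (b - a)]) (by positivity)
  have hδ : (b - a) ^ 2 ≤ 4.41 * α := by
    nlinarith [sq_abs (b - a), abs_nonneg (b - a)]
  have hrem : Phi'' (a + u) / 2 * (b - a) ^ 2 ≤ α * (Phi a * (0.65 + 1.17 * (a ^ 2 / 8))) := by
    calc Phi'' (a + u) / 2 * (b - a) ^ 2
        ≤ (1 / 4 + (a ^ 2 + 0.427) / 16) * (exp (a ^ 2 / 8) * 1.057) / 2 * (4.41 * α) := by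
          gcongr
      _ ≤ α * (Phi a * (0.65 + 1.17 * (a ^ 2 / 8))) := by
          rw [Phi_eq_exp_max, max_eq_left ha.le]
          nlinarith [mul_nonneg hα0 hE.le, mul_nonneg (mul_nonneg hα0 hE.le) (sq_nonneg a)]
  linarith

lemma Phi_update_le {α a b : ℝ} (hα0 : 0 ≤ α) (hα : α ≤ 1 / 640)
    (hαa : α * max a 0 ^ 2 ≤ 1 / 100) (hb : |b - (1 - α) * a| ≤ 2 * √α) :
    Phi b ≤ Phi a + Phi' a * (b - a) + α * (0.65 * Phi a + 1.17 * (Phi a * log (Phi a))) := by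
  rcases le_or_gt a 0 with ha | ha
  · rw [Phi_of_nonpos ha, Phi'_of_nonpos ha, log_one]
    linarith [Phi_update_le_of_nonpos hα0 (by linarith) ha hb]
  · rw [max_eq_left ha.le] at hαa
    rw [log_Phi, max_eq_left ha.le]
    linarith [Phi_update_le_of_pos hα0 hα ha hαa hb]

lemma max_sq_le_of_Phi_le {x M : ℝ} (h : Phi x ≤ M) : max x 0 ^ 2 ≤ 8 * log M := by
  have := log_le_log (Phi_pos x) h
  rw [log_Phi] at this
  linarith

section Weights

variable {ι : Type*} [Fintype ι]

noncomputable def normalizedWeights (w : ι → ℝ) (i : ι) : ℝ :=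
  if 0 < ∑ k, w k then w i / ∑ k, w k else 1 / Fintype.card ι

lemma normalizedWeights_nonneg {w : ι → ℝ} (hw : ∀ i, 0 ≤ w i) (i : ι) :
    0 ≤ normalizedWeights w i := by
  unfold normalizedWeights
  split_ifs with h
  · exact div_nonneg (hw i) h.le
  · positivity

lemma sum_normalizedWeights [Nonempty ι] (w : ι → ℝ) : ∑ i, normalizedWeights w i = 1 := by
  unfold normalizedWeights
  split_ifs with h
  · rw [← sum_div, div_self h.ne']
  · simp

lemma sum_mul_sub_weightedAvg {w : ι → ℝ} (hw : ∀ i, 0 ≤ w i) (g : ι → ℝ) :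
    ∑ i, w i * (g i - ∑ j, normalizedWeights w j * g j) = 0 := by
  rcases (sum_nonneg fun i _ => hw i).lt_or_eq with h | h
  · have hnw (j : ι) : normalizedWeights w j = w j / ∑ k, w k := if_pos h
    simp only [hnw, div_mul_eq_mul_div, ← sum_div, mul_sub, sum_sub_distrib, ← sum_mul,
      mul_div_cancel₀ _ h.ne', sub_self]
  · have hw0 := (sum_eq_zero_iff_of_nonneg fun i _ => hw i).1 h.symm
    exact sum_eq_zero fun i hi => by rw [hw0 i hi, zero_mul]

lemma abs_weightedAvg_le [Nonempty ι] {w g : ι → ℝ} {B : ℝ} (hw : ∀ i, 0 ≤ w i)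
    (hg : ∀ i, |g i| ≤ B) : |∑ i, normalizedWeights w i * g i| ≤ B :=
  calc |∑ i, normalizedWeights w i * g i| ≤ ∑ i, normalizedWeights w i * B := by
        refine (abs_sum_le_sum_abs _ _).trans (sum_le_sum fun i _ => ?_)
        rw [abs_mul, abs_of_nonneg (normalizedWeights_nonneg hw i)]
        exact mul_le_mul_of_nonneg_left (hg i) (normalizedWeights_nonneg hw i)
    _ = B := by rw [← sum_mul, sum_normalizedWeights, one_mul]

end Weights

lemma mul_log_ge_tangent {c t : ℝ} (hc : 0 < c) (ht : 0 < t) :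
    (1 + log c) * t - c ≤ t * log t := by
  have h := mul_le_mul_of_nonneg_left (log_le_sub_one_of_pos (div_pos hc ht)) ht.le
  rw [log_div hc.ne' ht.ne', mul_sub_one, mul_div_cancel₀ _ ht.ne'] at h
  linarith

lemma log_two_point_three_one_ge : 0.83 ≤ log 2.31 := by
  rw [le_log_iff_exp_le (by norm_num)]
  have h := quadratic_le_exp_of_nonneg (x := 0.17) (by norm_num)
  have h1 : exp 0.83 * exp 0.17 = exp 1 := by rw [← exp_add]; norm_num
  nlinarith [exp_pos 0.83, exp_one_lt_d9]

lemma log_two_point_three_two_ge : 0.8 ≤ log 2.32 := by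
  rw [le_log_iff_exp_le (by norm_num)]
  have h := add_one_le_exp (0.2 : ℝ)
  have h1 : exp 0.8 * exp 0.2 = exp 1 := by rw [← exp_add]; norm_num
  nlinarith [exp_pos 0.8, exp_one_lt_d9]

lemma sum_Phi_update_le {ι : Type*} [Fintype ι] {α : ℝ} {R R' : ι → ℝ} (hα0 : 0 ≤ α)
    (hα : α ≤ 1 / 640) (hR : ∀ i, α * max (R i) 0 ^ 2 ≤ 1 / 100)
    (hnoise : ∀ i, |R' i - (1 - α) * R i| ≤ 2 * √α)
    (hcancel : ∑ i, Phi' (R i) * (R' i - (1 - α) * R i) = 0) :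
    ∑ i, Phi (R' i) ≤ ∑ i, Phi (R i)
      + α * (0.65 * ∑ i, Phi (R i) - 0.83 * ∑ i, Phi (R i) * log (Phi (R i))) := by
  have hdrift : ∑ i, Phi' (R i) * (R' i - R i)
      = -(2 * α * ∑ i, Phi (R i) * log (Phi (R i))) := by
    have (i : ι) : Phi' (R i) * (R' i - R i)
        = Phi' (R i) * (R' i - (1 - α) * R i) - α * (Phi' (R i) * R i) := by ring
    simp only [this, sum_sub_distrib, hcancel, ← mul_sum, Phi'_mul_self]
    ring
  have hstep := sum_le_sum fun i (_ : i ∈ univ) => Phi_update_le hα0 hα (hR i) (hnoise i)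
  simp only [sum_add_distrib, ← mul_sum] at hstep
  linarith

lemma sum_Phi_update_lt {ι : Type*} [Fintype ι] {α : ℝ} {R R' : ι → ℝ} (hα0 : 0 < α)
    (hα : α ≤ 1 / 640) (hR : ∀ i, α * max (R i) 0 ^ 2 ≤ 1 / 100)
    (hnoise : ∀ i, |R' i - (1 - α) * R i| ≤ 2 * √α)
    (hcancel : ∑ i, Phi' (R i) * (R' i - (1 - α) * R i) = 0)
    (hP : 2.31 * Fintype.card ι < ∑ i, Phi (R i)) :
    ∑ i, Phi (R' i) < ∑ i, Phi (R i) := by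
  have hsum := sum_Phi_update_le hα0.le hα hR hnoise hcancel
  have htan := sum_le_sum fun i (_ : i ∈ univ) =>
    mul_log_ge_tangent (c := 2.31) (by norm_num) (Phi_pos (R i))
  simp only [sum_sub_distrib, ← mul_sum, sum_const, card_univ, nsmul_eq_mul] at htan
  have hdecr : 0.65 * ∑ i, Phi (R i) - 0.83 * ∑ i, Phi (R i) * log (Phi (R i)) < 0 := by
    nlinarith [log_two_point_three_one_ge]
  nlinarith

end NormalHedge

open NormalHedge in
theorem normalHedge_average_potential_decreases

    (N : ℕ)
    (α : ℝ) (hα0 : 0 < α) (hα : α < 1 / (800 * Real.log (2.32 * N)))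
    (R g : Fin N → ℝ) (hg : ∀ i, |g i| ≤ Real.sqrt α)
    (p : Fin N → ℝ)
    (hp : ∀ i, p i =
      if 0 < ∑ k, Phi' (R k) then Phi' (R i) / ∑ k, Phi' (R k) else 1 / N)
    (gA : ℝ) (hgA : gA = ∑ i, p i * g i)
    (R' : Fin N → ℝ) (hR' : ∀ i, R' i = (1 - α) * R i + g i - gA)
    (hΨlo : 2.31 < (1 / (N : ℝ)) * ∑ i, Phi (R i))
    (hΨhi : (1 / (N : ℝ)) * ∑ i, Phi (R i) < 2.32) :
    (1 / (N : ℝ)) * ∑ i, Phi (R' i) < (1 / (N : ℝ)) * ∑ i, Phi (R i) := by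
  have hN1 : (1 : ℝ) ≤ N := by
    rcases N.eq_zero_or_pos with rfl | hNpos
    · norm_num at hΨlo
    · exact_mod_cast hNpos
  have hN0 : (0 : ℝ) < N := by linarith
  have : Nonempty (Fin N) := ⟨⟨0, by exact_mod_cast hN0⟩⟩
  rw [one_div, lt_inv_mul_iff₀ hN0, mul_comm] at hΨlo
  rw [one_div, inv_mul_lt_iff₀ hN0, mul_comm] at hΨhi
  refine mul_lt_mul_of_pos_left ?_ (by positivity)
  have hL : 0.8 ≤ Real.log (2.32 * N) :=
    log_two_point_three_two_ge.trans (Real.log_le_log (by norm_num) (by linarith))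
  rw [lt_div_iff₀ (by positivity)] at hα
  have hpw : p = normalizedWeights fun k => Phi' (R k) :=
    funext fun i => by rw [hp i, normalizedWeights, Fintype.card_fin]
  have hnoise (i : Fin N) : R' i - (1 - α) * R i = g i - gA := by rw [hR' i]; ring
  have hgA_le : |gA| ≤ Real.sqrt α :=
    hgA ▸ hpw ▸ abs_weightedAvg_le (fun _ => Phi'_nonneg _) hg
  have hR (i : Fin N) : α * max (R i) 0 ^ 2 ≤ 1 / 100 := by
    have := max_sq_le_of_Phi_le
      ((single_le_sum (fun j _ => (Phi_pos (R j)).le) (mem_univ i)).trans hΨhi.le)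
    nlinarith
  exact sum_Phi_update_lt hα0 (by nlinarith) hR
    (fun i => by rw [hnoise]; linarith [abs_sub (g i) gA, hg i, hgA_le])
    (by simp only [hnoise, hgA, hpw]; exact sum_mul_sub_weightedAvg (fun _ => Phi'_nonneg _) g)
    (by rwa [Fintype.card_fin])
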